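/- Fix n ≥ 3 and three distinct indices e₁, e₂, e₃ ∈ {1,…,n}. Let f be the randomized mechanism for n agents in the Euclidean plane that, given a profile x ∈ (ℝ²)ⁿ, returns the centroid G = (x_{e₁}+x_{e₂}+x_{e₃})/3 with probability 1/2 and each of the points x_{e₁}, x_{e₂}, x_{e₃} with probability 1/6. Then: (i) f is truthful in expectation; (ii) for every profile x, C(f,x) ≤ 2·opt(x); and (iii) for every profile x for which there exist O ∈ ℝ² and R > 0 such that ‖x_j − O‖ ≤ R for all j ∈ {1,…,n}, ‖x_{e_i} − O‖ = R for i = 1,2,3, and O lies in the convex hull of {x_{e₁}, x_{e₂}, x_{e₃}} (i.e., the prediction of the extreme agents is correct and the minimum enclosing circle of all agents is the circumcircle of the three extreme agents), it holds that opt(x) = R and C(f,x) ≤ (5/3)·opt(x). -/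

import Mathlib

/-!
Moving agent `i`'s report by `d` moves each atom at `x i` by `d` and the centroid by at most
`d / 3` per such atom, so whatever agent `i` gains on the centroid (weight `1/2`) it loses on its
own atoms (weight `1/6` each): the mechanism is truthful.

For any reference point `y` with `M = maxᵢ dist y (x i)`, an atom `p` costs at most
`dist p y + M`. Averaging over the atoms gives `2M` for an arbitrary `y`, and `(5/3) R` for
`y = O`, since the extreme agents lie at distance `R` from `O` and, `O` lying in their triangle,
the centroid lies within `R / 3` of `O`. Finally `opt = R`: as the extreme agents surround `O`,
for every `y` one of them satisfies `⟪u - O, y - O⟫ ≤ 0`, hence `dist y u ≥ R`.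
-/

open MeasureTheory

/-- The randomized mechanism for `n` agents in the Euclidean plane that, given the
(predicted) extreme agents `e₁, e₂, e₃`, returns their centroid
`G = (x e₁ + x e₂ + x e₃)/3` with probability `1/2` and each of `x e₁`, `x e₂`, `x e₃`
with probability `1/6`. -/
noncomputable def centroidMech (n : ℕ) (e₁ e₂ e₃ : Fin n)
    (x : Fin n → EuclideanSpace ℝ (Fin 2)) : Measure (EuclideanSpace ℝ (Fin 2)) :=
  (1 / 2 : ENNReal) • Measure.dirac ((3⁻¹ : ℝ) • (x e₁ + x e₂ + x e₃))
    + (1 / 6 : ENNReal) • Measure.dirac (x e₁)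
    + (1 / 6 : ENNReal) • Measure.dirac (x e₂)
    + (1 / 6 : ENNReal) • Measure.dirac (x e₃)

open Metric Set

section Convex

variable {ι E : Type*} [Fintype ι]

lemma exists_weights_of_mem_convexHull_range [AddCommGroup E] [Module ℝ E] {v : ι → E} {x : E}
    (hx : x ∈ convexHull ℝ (range v)) :
    ∃ w : ι → ℝ, (∀ i, 0 ≤ w i) ∧ ∑ i, w i = 1 ∧ ∑ i, w i • v i = x := by
  classical
  have hv : range v = Fintype.linearCombination ℝ v '' range fun i => Pi.single i (1 : ℝ) := by
    rw [← range_comp]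
    congr 1
    funext i
    simp [Fintype.linearCombination_apply_single]
  rw [hv, ← LinearMap.image_convexHull, convexHull_rangle_single_eq_stdSimplex] at hx
  obtain ⟨w, ⟨hw₀, hw₁⟩, rfl⟩ := hx
  exact ⟨w, hw₀, hw₁, (Fintype.linearCombination_apply ℝ v w).symm⟩

lemma norm_sum_le_of_sum_smul_eq_zero [SeminormedAddCommGroup E] [NormedSpace ℝ E]
    {u : ι → E} {w : ι → ℝ} {R : ℝ} (hu : ∀ i, ‖u i‖ = R) (hw₀ : ∀ i, 0 ≤ w i)
    (hw₁ : ∑ i, w i = 1) (hwu : ∑ i, w i • u i = 0) :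
    ‖∑ i, u i‖ ≤ (Fintype.card ι - 2) * R := by
  classical
  have hnorm : ∀ s : Finset ι, ∀ c : ι → ℝ, (∀ i ∈ s, 0 ≤ c i) →
      ‖∑ i ∈ s, c i • u i‖ ≤ (∑ i ∈ s, c i) * R := fun s c hc => by
    refine (norm_sum_le _ _).trans_eq ?_
    rw [Finset.sum_mul]
    exact Finset.sum_congr rfl fun i hi => by rw [norm_smul, hu, Real.norm_of_nonneg (hc i hi)]
  obtain ⟨k, -, hk⟩ := Finset.exists_max_image Finset.univ w
    (Finset.nonempty_of_sum_ne_zero (hw₁.trans_ne one_ne_zero))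
  have hwk : 0 < w k := by
    have := Finset.sum_le_card_nsmul Finset.univ w (w k) hk
    rw [hw₁, nsmul_eq_mul] at this
    nlinarith
  have hk_half : (2 * w k - 1) * R ≤ 0 := by
    have hsplit := Finset.add_sum_erase Finset.univ (fun i => w i • u i) (Finset.mem_univ k)
    have hsplit' := Finset.add_sum_erase Finset.univ w (Finset.mem_univ k)
    rw [hwu, add_eq_zero_iff_eq_neg] at hsplit
    rw [hw₁, ← eq_sub_iff_add_eq'] at hsplit'
    have hk_eq := congrArg norm hsplit
    rw [norm_neg, norm_smul, hu, Real.norm_of_nonneg hwk.le] at hk_eq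
    have hrest := hnorm (Finset.univ.erase k) w fun i _ => hw₀ i
    rw [hsplit'] at hrest
    linarith
  have hshift : w k • ∑ i, u i = ∑ i, (w k - w i) • u i := by
    simp only [sub_smul, Finset.sum_sub_distrib, hwu, sub_zero, Finset.smul_sum]
  have hmain : w k * ‖∑ i, u i‖ ≤ (Fintype.card ι * w k - 1) * R := by
    have := hnorm Finset.univ (fun i => w k - w i) fun i _ =>
      sub_nonneg.2 (hk i (Finset.mem_univ i))
    rw [← hshift, norm_smul, Real.norm_of_nonneg hwk.le, Finset.sum_sub_distrib, hw₁,
      Finset.sum_const, Finset.card_univ, nsmul_eq_mul] at this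
    exact this
  refine le_of_mul_le_mul_left ?_ hwk
  linarith

end Convex

section Sphere

variable {E : Type*}

lemma dist_centroid_eq [SeminormedAddCommGroup E] [NormedSpace ℝ E] (a b c y : E) :
    dist ((3⁻¹ : ℝ) • (a + b + c)) y = 3⁻¹ * ‖a - y + (b - y) + (c - y)‖ := by
  rw [dist_eq_norm, show (3⁻¹ : ℝ) • (a + b + c) - y = (3⁻¹ : ℝ) • (a - y + (b - y) + (c - y)) by
    module, norm_smul, Real.norm_of_nonneg (by norm_num)]

lemma dist_centroid_le [SeminormedAddCommGroup E] [NormedSpace ℝ E] (a b c y : E) :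
    dist ((3⁻¹ : ℝ) • (a + b + c)) y ≤ 3⁻¹ * (dist a y + dist b y + dist c y) := by
  rw [dist_centroid_eq, dist_eq_norm a, dist_eq_norm b, dist_eq_norm c]
  gcongr
  exact norm_add₃_le

/-- `O + (a - O) + (b - O) + (c - O)` is the orthocenter of the triangle `abc` with circumcenter
`O`, and `O` lies in the triangle exactly when it has no obtuse angle. -/
lemma dist_centroid_le_of_mem_convexHull [SeminormedAddCommGroup E] [NormedSpace ℝ E]
    {a b c O : E} {R : ℝ} (ha : dist a O = R) (hb : dist b O = R) (hc : dist c O = R)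
    (hO : O ∈ convexHull ℝ {a, b, c}) :
    dist ((3⁻¹ : ℝ) • (a + b + c)) O ≤ 3⁻¹ * R := by
  have hrange : range ![a, b, c] = {a, b, c} := by
    rw [Matrix.range_cons, Matrix.range_cons_cons_empty, singleton_union]
  obtain ⟨w, hw₀, hw₁, hwO⟩ :=
    exists_weights_of_mem_convexHull_range (v := ![a, b, c]) (hrange ▸ hO)
  have hsum : ‖∑ i, (![a, b, c] i - O)‖ ≤ (Fintype.card (Fin 3) - 2) * R := by
    refine norm_sum_le_of_sum_smul_eq_zero (fun i => ?_) hw₀ hw₁ ?_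
    · rw [← dist_eq_norm]
      fin_cases i <;> assumption
    · simp only [smul_sub, Finset.sum_sub_distrib, ← Finset.sum_smul, hwO, hw₁, one_smul,
        sub_self]
  rw [dist_centroid_eq]
  rw [Fin.sum_univ_three, Fintype.card_fin] at hsum
  change ‖a - O + (b - O) + (c - O)‖ ≤ _ at hsum
  norm_num at hsum
  linarith

lemma exists_le_dist_of_mem_convexHull [NormedAddCommGroup E] [InnerProductSpace ℝ E]
    {s : Set E} {O : E} {R : ℝ} (hs : s ⊆ sphere O R) (hO : O ∈ convexHull ℝ s) (y : E) :
    ∃ u ∈ s, R ≤ dist y u := by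
  obtain ⟨u, hus, hu⟩ : ∃ u ∈ s, inner ℝ (y - O) u ≤ inner ℝ (y - O) O := by
    by_contra! h
    have hsub : convexHull ℝ s ⊆ {p | inner ℝ (y - O) O < inner ℝ (y - O) p} :=
      convexHull_min h (convex_halfSpace_gt (innerSL ℝ (y - O)).isLinear _)
    have hOO : inner ℝ (y - O) O < inner ℝ (y - O) O := hsub hO
    exact lt_irrefl _ hOO
  have huO : dist u O = R := hs hus
  have hsq : dist y u ^ 2 = ‖y - O‖ ^ 2 - 2 * inner ℝ (y - O) (u - O) + R ^ 2 := by
    rw [dist_eq_norm, show y - u = (y - O) - (u - O) by abel, norm_sub_sq_real,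
      ← dist_eq_norm u O, huO]
  rw [inner_sub_right] at hsq
  refine ⟨u, hus, ?_⟩
  nlinarith [dist_nonneg (x := y) (y := u), dist_nonneg (x := u) (y := O)]

lemma iInf_iSup_dist_eq_of_mem_convexHull [NormedAddCommGroup E] [InnerProductSpace ℝ E]
    {ι : Type*} [Finite ι] (x : ι → E) {s : Set E} {O : E} {R : ℝ} (hR : 0 ≤ R)
    (hx : ∀ j, dist (x j) O ≤ R) (hsx : s ⊆ range x) (hs : s ⊆ sphere O R)
    (hO : O ∈ convexHull ℝ s) :
    ⨅ y : E, ⨆ i, dist y (x i) = R := by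
  refine le_antisymm ((ciInf_le ⟨0, ?_⟩ O).trans ?_) (le_ciInf fun y => ?_)
  · rintro _ ⟨y, rfl⟩
    exact Real.iSup_nonneg fun _ => dist_nonneg
  · exact Real.iSup_le (fun j => dist_comm O (x j) ▸ hx j) hR
  · obtain ⟨u, hu, hRu⟩ := exists_le_dist_of_mem_convexHull hs hO y
    obtain ⟨j, rfl⟩ := hsx hu
    exact hRu.trans (le_ciSup (Finite.bddAbove_range fun i => dist y (x i)) j)

end Sphere

lemma iSup_dist_le_dist_add_iSup_dist {ι α : Type*} [Finite ι] [PseudoMetricSpace α]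
    (x : ι → α) (p y : α) : ⨆ i, dist p (x i) ≤ dist p y + ⨆ i, dist y (x i) :=
  Real.iSup_le (fun i => (dist_triangle p y (x i)).trans
      (add_le_add_right (le_ciSup (Finite.bddAbove_range fun i => dist y (x i)) i) _))
    (add_nonneg dist_nonneg (Real.iSup_nonneg fun _ => dist_nonneg))

lemma dist_update_eq_dist_add_dist {ι α : Type*} [DecidableEq ι] [PseudoMetricSpace α]
    (x : ι → α) (i : ι) (t : α) (e : ι) :
    dist (Function.update x i t e) (x i)
      = dist (Function.update x i t e) (x e) + dist (x e) (x i) := by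
  rcases eq_or_ne e i with rfl | h
  · simp
  · simp [Function.update_of_ne h]

lemma centroid_lottery_dist_le {E : Type*} [SeminormedAddCommGroup E] [NormedSpace ℝ E]
    {a b₁ b₂ b₃ c₁ c₂ c₃ : E} (h₁ : dist c₁ a = dist c₁ b₁ + dist b₁ a)
    (h₂ : dist c₂ a = dist c₂ b₂ + dist b₂ a) (h₃ : dist c₃ a = dist c₃ b₃ + dist b₃ a) :
    1 / 2 * dist ((3⁻¹ : ℝ) • (b₁ + b₂ + b₃)) a + 1 / 6 * dist b₁ a + 1 / 6 * dist b₂ a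
        + 1 / 6 * dist b₃ a
      ≤ 1 / 2 * dist ((3⁻¹ : ℝ) • (c₁ + c₂ + c₃)) a + 1 / 6 * dist c₁ a + 1 / 6 * dist c₂ a
        + 1 / 6 * dist c₃ a := by
  have hG : dist ((3⁻¹ : ℝ) • (b₁ + b₂ + b₃)) ((3⁻¹ : ℝ) • (c₁ + c₂ + c₃))
      ≤ 3⁻¹ * (dist c₁ b₁ + dist c₂ b₂ + dist c₃ b₃) := by
    rw [dist_smul₀, Real.norm_of_nonneg (by norm_num), dist_comm c₁, dist_comm c₂, dist_comm c₃]
    gcongr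
    exact (dist_add_add_le _ _ _ _).trans (add_le_add_left (dist_add_add_le _ _ _ _) _)
  linarith [dist_triangle ((3⁻¹ : ℝ) • (b₁ + b₂ + b₃)) ((3⁻¹ : ℝ) • (c₁ + c₂ + c₃)) a]

section Mechanism

variable {n : ℕ} (e₁ e₂ e₃ : Fin n) (x : Fin n → EuclideanSpace ℝ (Fin 2))

lemma integral_centroidMech (g : EuclideanSpace ℝ (Fin 2) → ℝ) :
    ∫ y, g y ∂centroidMech n e₁ e₂ e₃ x
      = 1 / 2 * g ((3⁻¹ : ℝ) • (x e₁ + x e₂ + x e₃))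
        + 1 / 6 * g (x e₁) + 1 / 6 * g (x e₂) + 1 / 6 * g (x e₃) := by
  have hint : ∀ (c : ENNReal) (p : EuclideanSpace ℝ (Fin 2)), c ≠ ⊤ →
      Integrable g (c • Measure.dirac p) :=
    fun c p hc => (integrable_dirac enorm_lt_top).smul_measure hc
  have i₀ := hint (1 / 2) ((3⁻¹ : ℝ) • (x e₁ + x e₂ + x e₃)) (by simp)
  have i₁ := hint (1 / 6) (x e₁) (by simp)
  have i₂ := hint (1 / 6) (x e₂) (by simp)
  have i₃ := hint (1 / 6) (x e₃) (by simp)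
  rw [centroidMech, integral_add_measure ((i₀.add_measure i₁).add_measure i₂) i₃,
    integral_add_measure (i₀.add_measure i₁) i₂, integral_add_measure i₀ i₁,
    integral_smul_measure, integral_smul_measure, integral_smul_measure, integral_smul_measure,
    integral_dirac, integral_dirac, integral_dirac, integral_dirac]
  simp [smul_eq_mul]

lemma integral_iSup_dist_centroidMech_le (y : EuclideanSpace ℝ (Fin 2)) :
    ∫ p, (⨆ i, dist p (x i)) ∂centroidMech n e₁ e₂ e₃ x
      ≤ (⨆ i, dist y (x i)) + 1 / 2 * dist ((3⁻¹ : ℝ) • (x e₁ + x e₂ + x e₃)) y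
        + 1 / 6 * (dist (x e₁) y + dist (x e₂) y + dist (x e₃) y) := by
  rw [integral_centroidMech]
  have := iSup_dist_le_dist_add_iSup_dist x ((3⁻¹ : ℝ) • (x e₁ + x e₂ + x e₃)) y
  have := iSup_dist_le_dist_add_iSup_dist x (x e₁) y
  have := iSup_dist_le_dist_add_iSup_dist x (x e₂) y
  have := iSup_dist_le_dist_add_iSup_dist x (x e₃) y
  linarith

end Mechanism

theorem stmt16_general (n : ℕ) (e₁ e₂ e₃ : Fin n) :
    -- (i) truthful in expectation
    (∀ (x : Fin n → EuclideanSpace ℝ (Fin 2)) (i : Fin n)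
        (x' : EuclideanSpace ℝ (Fin 2)),
      ∫ y, dist y (x i) ∂(centroidMech n e₁ e₂ e₃ x)
        ≤ ∫ y, dist y (x i) ∂(centroidMech n e₁ e₂ e₃ (Function.update x i x'))) ∧
    -- (ii) 2-robustness
    (∀ x : Fin n → EuclideanSpace ℝ (Fin 2),
      ∫ y, (⨆ i, dist y (x i)) ∂(centroidMech n e₁ e₂ e₃ x)
        ≤ 2 * ⨅ y : EuclideanSpace ℝ (Fin 2), ⨆ i, dist y (x i)) ∧
    -- (iii) (5/3)-consistency when the extreme-agent prediction is correct
    (∀ (x : Fin n → EuclideanSpace ℝ (Fin 2)) (O : EuclideanSpace ℝ (Fin 2)) (R : ℝ),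
      0 < R →
      (∀ j, dist (x j) O ≤ R) →
      dist (x e₁) O = R → dist (x e₂) O = R → dist (x e₃) O = R →
      O ∈ convexHull ℝ {x e₁, x e₂, x e₃} →
      (⨅ y : EuclideanSpace ℝ (Fin 2), ⨆ i, dist y (x i)) = R ∧
      ∫ y, (⨆ i, dist y (x i)) ∂(centroidMech n e₁ e₂ e₃ x)
        ≤ (5 / 3) * ⨅ y : EuclideanSpace ℝ (Fin 2), ⨆ i, dist y (x i)) := by
  refine ⟨fun x i x' => ?_, fun x => ?_, fun x O R hR hall h₁ h₂ h₃ hO => ?_⟩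
  · rw [integral_centroidMech, integral_centroidMech]
    exact centroid_lottery_dist_le (dist_update_eq_dist_add_dist x i x' e₁)
      (dist_update_eq_dist_add_dist x i x' e₂) (dist_update_eq_dist_add_dist x i x' e₃)
  · have hcost : ∀ y, (∫ p, (⨆ i, dist p (x i)) ∂centroidMech n e₁ e₂ e₃ x) / 2
        ≤ ⨆ i, dist y (x i) := fun y => by
      have hle : ∀ j, dist (x j) y ≤ ⨆ i, dist y (x i) := fun j =>
        dist_comm y (x j) ▸ le_ciSup (Finite.bddAbove_range fun i => dist y (x i)) j
      linarith [integral_iSup_dist_centroidMech_le e₁ e₂ e₃ x y,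
        dist_centroid_le (x e₁) (x e₂) (x e₃) y, hle e₁, hle e₂, hle e₃]
    linarith [le_ciInf hcost]
  · have hopt : ⨅ y : EuclideanSpace ℝ (Fin 2), ⨆ i, dist y (x i) = R :=
      iInf_iSup_dist_eq_of_mem_convexHull x hR.le hall
        (insert_subset_iff.2 ⟨mem_range_self _, pair_subset (mem_range_self _) (mem_range_self _)⟩)
        (insert_subset_iff.2 ⟨h₁, pair_subset h₂ h₃⟩) hO
    refine ⟨hopt, ?_⟩
    rw [hopt]
    linarith [integral_iSup_dist_centroidMech_le e₁ e₂ e₃ x O,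
      dist_centroid_le_of_mem_convexHull h₁ h₂ h₃ hO,
      Real.iSup_le (fun j => dist_comm O (x j) ▸ hall j) hR.le]

/-- the mechanism `centroidMech` (i) is truthful in expectation,
(ii) is 2-robust (cost at most `2·opt(x)` on every profile), and (iii) on profiles for
which there are `O` and `R > 0` with all agents in the closed disk of center `O` and
radius `R`, the three agents `e₁, e₂, e₃` on its boundary circle, and `O` in the convex
hull of `{x e₁, x e₂, x e₃}` (the prediction of the extreme agents is correct and the
minimum enclosing circle is the circumcircle of the three extreme agents), it holds that
`opt(x) = R` and the cost is at most `(5/3)·opt(x)`. -/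
theorem stmt16 (n : ℕ) (hn : 3 ≤ n) (e₁ e₂ e₃ : Fin n)
    (hee : e₁ ≠ e₂ ∧ e₁ ≠ e₃ ∧ e₂ ≠ e₃) :
    -- (i) truthful in expectation
    (∀ (x : Fin n → EuclideanSpace ℝ (Fin 2)) (i : Fin n)
        (x' : EuclideanSpace ℝ (Fin 2)),
      ∫ y, dist y (x i) ∂(centroidMech n e₁ e₂ e₃ x)
        ≤ ∫ y, dist y (x i) ∂(centroidMech n e₁ e₂ e₃ (Function.update x i x'))) ∧
    -- (ii) 2-robustness
    (∀ x : Fin n → EuclideanSpace ℝ (Fin 2),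
      ∫ y, (⨆ i, dist y (x i)) ∂(centroidMech n e₁ e₂ e₃ x)
        ≤ 2 * ⨅ y : EuclideanSpace ℝ (Fin 2), ⨆ i, dist y (x i)) ∧
    -- (iii) (5/3)-consistency when the extreme-agent prediction is correct
    (∀ (x : Fin n → EuclideanSpace ℝ (Fin 2)) (O : EuclideanSpace ℝ (Fin 2)) (R : ℝ),
      0 < R →
      (∀ j, dist (x j) O ≤ R) →
      dist (x e₁) O = R → dist (x e₂) O = R → dist (x e₃) O = R →
      O ∈ convexHull ℝ {x e₁, x e₂, x e₃} →
      (⨅ y : EuclideanSpace ℝ (Fin 2), ⨆ i, dist y (x i)) = R ∧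
      ∫ y, (⨆ i, dist y (x i)) ∂(centroidMech n e₁ e₂ e₃ x)
        ≤ (5 / 3) * ⨅ y : EuclideanSpace ℝ (Fin 2), ⨆ i, dist y (x i)) :=
  stmt16_general n e₁ e₂ e₃
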